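/- arXiv:2301.03255 — 2 statements merged into one kernel-verified Lean document; each statement's English description precedes it below -/
import Mathlib

section
/- Let n ≥ 2 be an integer, ε_n = e^{2πi/n}, let C : ℤ → ℂ be an n-periodic sequence, let r, p ∈ ℤ, let q ∈ ℂ, and let λ ∈ ℂ with λ^n ≠ 1. Then in the ring of formal power series ℂ[[t]] one has the generating function identity Σ_{m=0}^∞ E_{m+1,n}^{r,p}(q,λ;C) t^m/m! = (-1)^p Σ_{k=1}^{n-1} ε_n^{-k(r+p)} C_{-k} · e^{qt} · (λ e^t - ε_n^{-k})^{-1}, where (λ e^t - ε_n^{-k})^{-1} denotes the inverse of λ e^t - ε_n^{-k} in ℂ[[t]] (its constant term λ - ε_n^{-k} is nonzero since λ^n ≠ 1). -/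
open Finset

/-- `eps n = e^{2πi/n}`, a primitive `n`-th root of unity in `ℂ`. -/
noncomputable def eps (n : ℕ) : ℂ := Complex.exp (2 * Real.pi * Complex.I / n)

/-- `expPS q = e^{qt} = Σ_j q^j t^j / j!` as a formal power series in `ℂ[[t]]`. -/
noncomputable def expPS (q : ℂ) : PowerSeries ℂ :=
  PowerSeries.mk fun j => q ^ j / j.factorial

/-- The Dedekind sum
`E_{m,n}^{r,p}(q,λ;C) = Σ_{k=1}^{n-1} ε_n^{-kr} H_{m-1}^{(p)}(q,λ,ε_n^{-k}) C_{-k} / (1-ε_n^k)^p`,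
where `H p m q λ γ` denotes the generalized Frobenius–Euler polynomial `H_m^{(p)}(q,λ,γ)`. -/
noncomputable def dedekindE (H : ℤ → ℕ → ℂ → ℂ → ℂ → ℂ) (n m : ℕ) (r p : ℤ)
    (q lam : ℂ) (Cf : ℤ → ℂ) : ℂ :=
  ∑ k ∈ Finset.Ico 1 n,
    eps n ^ (-(k : ℤ) * r) * H p (m - 1) q lam (eps n ^ (-(k : ℤ))) * Cf (-(k : ℤ))
      / (1 - eps n ^ (k : ℤ)) ^ p

/-- Generating function for the Dedekind sums `E_{m,n}^{r,p}(q,λ;C)`: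
`Σ_{m≥0} E_{m+1,n}^{r,p}(q,λ;C) t^m/m!
  = (-1)^p Σ_{k=1}^{n-1} ε_n^{-k(r+p)} C_{-k} e^{qt} (λe^t - ε_n^{-k})^{-1}` in `ℂ[[t]]`. -/
theorem dedekindE_generating_function
    (n : ℕ) (hn : 2 ≤ n) (Cf : ℤ → ℂ) (hCper : ∀ k : ℤ, Cf (k + n) = Cf k)
    (H : ℤ → ℕ → ℂ → ℂ → ℂ → ℂ)
    (hH : ∀ (p : ℤ) (q lam γ : ℂ), γ ≠ 1 → lam ≠ γ →
      (PowerSeries.C lam * expPS 1 - PowerSeries.C γ) *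
          PowerSeries.mk (fun m => H p m q lam γ / m.factorial)
        = PowerSeries.C ((1 - γ) ^ p) * expPS q)
    (r p : ℤ) (q lam : ℂ) (hlam : lam ^ n ≠ 1) :
    PowerSeries.mk (fun m => dedekindE H n (m + 1) r p q lam Cf / m.factorial)
      = PowerSeries.C ((-1 : ℂ) ^ p) *
          ∑ k ∈ Finset.Ico 1 n,
            PowerSeries.C (eps n ^ (-(k : ℤ) * (r + p)) * Cf (-(k : ℤ))) *
              (expPS q *
                (PowerSeries.C lam * expPS 1 - PowerSeries.C (eps n ^ (-(k : ℤ))))⁻¹) := by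
  have hn0 : (n : ℕ) ≠ 0 := by omega
  have hprim : IsPrimitiveRoot (eps n) n := Complex.isPrimitiveRoot_exp n hn0
  have heps0 : eps n ≠ 0 := hprim.ne_zero hn0
  -- Step 1: rewrite LHS as a sum of series
  have hLHS : PowerSeries.mk (fun m => dedekindE H n (m + 1) r p q lam Cf / m.factorial)
      = ∑ k ∈ Finset.Ico 1 n,
          PowerSeries.C (eps n ^ (-(k : ℤ) * r) * Cf (-(k : ℤ)) / (1 - eps n ^ (k : ℤ)) ^ p) *
            PowerSeries.mk (fun m => H p m q lam (eps n ^ (-(k : ℤ))) / m.factorial) := by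
    ext m
    simp only [PowerSeries.coeff_mk, dedekindE, Nat.add_sub_cancel, map_sum,
      PowerSeries.coeff_C_mul, Finset.sum_div]
    exact Finset.sum_congr rfl fun k _ => by ring
  rw [hLHS, Finset.mul_sum]
  refine Finset.sum_congr rfl fun k hk => ?_
  simp only [Finset.mem_Ico] at hk
  set γ := eps n ^ (-(k : ℤ)) with hγdef
  have hεk1 : eps n ^ (k : ℤ) ≠ 1 := by
    rw [zpow_natCast]
    intro h
    have hd := (hprim.pow_eq_one_iff_dvd k).mp h
    exact absurd (Nat.le_of_dvd (by omega) hd) (by omega)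
  have hγ1 : γ ≠ 1 := by
    rw [hγdef, zpow_neg]
    exact fun h => hεk1 (inv_eq_one.mp h)
  have hlamγ : lam ≠ γ := by
    intro h
    apply hlam
    rw [h, hγdef, ← zpow_natCast, ← zpow_mul]
    rw [show (-(k:ℤ)) * n = n * (-(k:ℤ)) by ring, zpow_mul, zpow_natCast]
    rw [hprim.pow_eq_one]
    simp
  have hf : PowerSeries.constantCoeff
      (PowerSeries.C lam * expPS 1 - PowerSeries.C γ) ≠ 0 := by
    simp only [map_sub, map_mul, PowerSeries.constantCoeff_C, expPS,
      PowerSeries.constantCoeff_mk, pow_zero, Nat.factorial_zero, Nat.cast_one, div_one, mul_one]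
    exact sub_ne_zero.mpr hlamγ
  have hmk : PowerSeries.mk (fun m => H p m q lam γ / m.factorial)
      = (PowerSeries.C lam * expPS 1 - PowerSeries.C γ)⁻¹ *
          (PowerSeries.C ((1 - γ) ^ p) * expPS q) := by
    rw [← hH p q lam γ hγ1 hlamγ, ← mul_assoc, PowerSeries.inv_mul_cancel _ hf, one_mul]
  rw [hmk]
  have hconst : eps n ^ (-(k : ℤ) * r) * Cf (-(k : ℤ)) / (1 - eps n ^ (k : ℤ)) ^ p * (1 - γ) ^ p
      = (-1 : ℂ) ^ p * (eps n ^ (-(k : ℤ) * (r + p)) * Cf (-(k : ℤ))) := by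
    have h2 : (1 - eps n ^ (k : ℤ)) ≠ 0 := sub_ne_zero.mpr (Ne.symm hεk1)
    have hD : (1 - eps n ^ (k : ℤ)) ^ p ≠ 0 := zpow_ne_zero _ h2
    have hmulinv : eps n ^ (-(k:ℤ)) * eps n ^ (k:ℤ) = 1 := by
      rw [← zpow_add₀ heps0]; simp
    have h1 : (1 - γ) = (-(eps n ^ (-(k:ℤ)))) * (1 - eps n ^ (k : ℤ)) := by
      rw [hγdef]; linear_combination -hmulinv
    have h3 : ((-(eps n ^ (-(k:ℤ)))) * (1 - eps n ^ (k:ℤ))) ^ p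
        = ((-1:ℂ)^p * eps n ^ (-(k:ℤ)*p)) * (1 - eps n ^ (k:ℤ))^p := by
      rw [mul_zpow, neg_eq_neg_one_mul, mul_zpow, ← zpow_mul]
    have hsplit : eps n ^ (-(k:ℤ)*(r+p)) = eps n ^ (-(k:ℤ)*r) * eps n ^ (-(k:ℤ)*p) := by
      rw [← zpow_add₀ heps0]; ring_nf
    rw [h1, h3, hsplit, div_eq_mul_inv]
    have hre : eps n ^ (-(k:ℤ)*r) * Cf (-(k:ℤ)) * ((1 - eps n ^ (k:ℤ))^p)⁻¹ *
          ((-1:ℂ)^p * eps n ^ (-(k:ℤ)*p) * (1 - eps n ^ (k:ℤ))^p)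
        = (-1:ℂ)^p * (eps n ^ (-(k:ℤ)*r) * eps n ^ (-(k:ℤ)*p) * Cf (-(k:ℤ))) *
          ((1 - eps n ^ (k:ℤ))^p * ((1 - eps n ^ (k:ℤ))^p)⁻¹) := by ring
    rw [hre, mul_inv_cancel₀ hD, mul_one]
  have hC := congrArg PowerSeries.C hconst
  rw [map_mul, map_mul] at hC
  linear_combination (expPS q * (PowerSeries.C lam * expPS 1 - PowerSeries.C γ)⁻¹) * hC
end

section
/- Let n ≥ 2 be an integer, ε_n = e^{2πi/n}, let K : ℤ → ℂ be an n-periodic sequence with C_k = Σ_{j=0}^{n-1} K_j ε_n^{kj}, let r, p ∈ ℤ, q ∈ ℂ, and λ ∈ ℂ with λ^n ≠ 1. Let G_n^{r,p}(q,λ,t;C) := Σ_{m=0}^∞ E_{m+1,n}^{r,p}(q,λ;C) t^m/m! ∈ ℂ[[t]]. Then C_0 · e^{qt} · (λ e^t - 1)^{-1} + (-1)^p G_n^{r,p}(q,λ,t;C) = n · e^{qt} · (λ^n e^{nt} - 1)^{-1} · Σ_{j=0}^{n-1} K_{j-r-p+1} λ^j e^{jt}, where the inverses are taken in ℂ[[t]]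 (the constant terms λ - 1 and λ^n - 1 are nonzero since λ^n ≠ 1). -/
open Finset

lemma expPS_eq (q : ℂ) : expPS q = PowerSeries.rescale q (PowerSeries.exp ℂ) := by
  ext j
  simp [expPS, PowerSeries.coeff_rescale, PowerSeries.coeff_exp, eq_ratCast]
  ring

lemma expPS_add (a b : ℂ) : expPS a * expPS b = expPS (a + b) := by
  simp only [expPS_eq]
  exact PowerSeries.exp_mul_exp_eq_exp_add a b

lemma constCoeff_expPS (q : ℂ) : PowerSeries.constantCoeff (expPS q) = 1 := by
  rw [expPS_eq]
  simp [PowerSeries.exp, ← PowerSeries.coeff_zero_eq_constantCoeff,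
    PowerSeries.coeff_rescale]

lemma expPS_zero : expPS 0 = 1 := by
  ext j
  simp [expPS, PowerSeries.coeff_one]
  rcases j with _ | j <;> simp

lemma C_expPS_mul (a b u v : ℂ) :
    (PowerSeries.C a * expPS u) * (PowerSeries.C b * expPS v)
      = PowerSeries.C (a * b) * expPS (u + v) := by
  rw [map_mul, ← expPS_add]; ring

/-- With `G_n^{r,p}(q,λ,t;C) = Σ_{m≥0} E_{m+1,n}^{r,p}(q,λ;C) t^m/m!` one has
`C_0 e^{qt} (λe^t-1)^{-1} + (-1)^p G_n^{r,p}(q,λ,t;C)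
 = n e^{qt} (λ^n e^{nt}-1)^{-1} Σ_{j=0}^{n-1} K_{j-r-p+1} λ^j e^{jt}` in `ℂ[[t]]`. -/
theorem dedekindE_generating_function_closed_form
    (n : ℕ) (hn : 2 ≤ n) (K : ℤ → ℂ) (hK : ∀ j : ℤ, K (j + n) = K j)
    (Cf : ℤ → ℂ)
    (hCf : ∀ k : ℤ, Cf k = ∑ j ∈ Finset.range n, K j * eps n ^ (k * j))
    (H : ℤ → ℕ → ℂ → ℂ → ℂ → ℂ)
    (hH : ∀ (p : ℤ) (q lam γ : ℂ), γ ≠ 1 → lam ≠ γ →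
      (PowerSeries.C lam * expPS 1 - PowerSeries.C γ) *
          PowerSeries.mk (fun m => H p m q lam γ / m.factorial)
        = PowerSeries.C ((1 - γ) ^ p) * expPS q)
    (r p : ℤ) (q lam : ℂ) (hlam : lam ^ n ≠ 1)
    (G : PowerSeries ℂ)
    (hG : G = PowerSeries.mk (fun m => dedekindE H n (m + 1) r p q lam Cf / m.factorial)) :
    PowerSeries.C (Cf 0) * (expPS q * (PowerSeries.C lam * expPS 1 - 1)⁻¹)
        + PowerSeries.C ((-1 : ℂ) ^ p) * G
      = PowerSeries.C (n : ℂ) *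
          (expPS q * (PowerSeries.C (lam ^ n) * expPS (n : ℂ) - 1)⁻¹ *
            ∑ j ∈ Finset.range n,
              PowerSeries.C (K ((j : ℤ) - r - p + 1) * lam ^ j) * expPS (j : ℂ)) := by
  have hn0 : n ≠ 0 := by omega
  set ε : ℂ := eps n with hεdef
  have hprim : IsPrimitiveRoot ε n := Complex.isPrimitiveRoot_exp n hn0
  have hε0 : ε ≠ 0 := Complex.exp_ne_zero _
  have hz : ∀ a b : ℤ, ε ^ a * ε ^ b = ε ^ (a + b) := fun a b => (zpow_add₀ hε0 a b).symm
  set ω : ℕ → ℂ := fun k => ε ^ (-(k : ℤ)) with hωdef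
  set x : PowerSeries ℂ := PowerSeries.C lam * expPS 1 with hxdef
  set D : PowerSeries ℂ := PowerSeries.C (lam ^ n) * expPS (n : ℂ) - 1 with hDdef
  set S : ℕ → PowerSeries ℂ := fun k =>
    ∑ i ∈ Finset.range n, PowerSeries.C (ω k ^ (n - 1 - i) * lam ^ i) * expPS (i : ℂ)
    with hSdef
  -- ω k ^ n = 1
  have hωn : ∀ k : ℕ, ω k ^ n = 1 := by
    intro k
    have : ω k ^ n = ε ^ (-(k : ℤ) * n) := by
      rw [← zpow_natCast (ω k) n, hωdef, ← zpow_mul]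
    rw [this, mul_comm, zpow_mul, zpow_natCast, hprim.pow_eq_one, one_zpow]
  -- A_k * S_k = D
  have hAS : ∀ k : ℕ, (x - PowerSeries.C (ω k)) * S k = D := by
    intro k
    set f : ℕ → PowerSeries ℂ := fun i =>
      PowerSeries.C (ω k ^ (n - i) * lam ^ i) * expPS (i : ℂ) with hfdef
    have : (x - PowerSeries.C (ω k)) * S k = ∑ i ∈ Finset.range n, (f (i + 1) - f i) := by
      rw [hSdef, Finset.mul_sum]
      refine Finset.sum_congr rfl fun i hi => ?_
      have hiN : i < n := Finset.mem_range.mp hi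
      have h1 : x * (PowerSeries.C (ω k ^ (n - 1 - i) * lam ^ i) * expPS (i : ℂ))
          = f (i + 1) := by
        rw [hxdef, C_expPS_mul, hfdef]
        have e1 : lam * (ω k ^ (n - 1 - i) * lam ^ i) = ω k ^ (n - (i + 1)) * lam ^ (i + 1) := by
          rw [show n - (i + 1) = n - 1 - i by omega, pow_succ]; ring
        have e2 : (1 : ℂ) + i = ((i + 1 : ℕ) : ℂ) := by push_cast; ring
        rw [e1, e2]
      have h2 : PowerSeries.C (ω k) *
            (PowerSeries.C (ω k ^ (n - 1 - i) * lam ^ i) * expPS (i : ℂ)) = f i := by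
        rw [← mul_assoc, ← map_mul, hfdef]
        congr 2
        rw [show n - i = (n - 1 - i) + 1 by omega, pow_succ]; ring
      rw [sub_mul, h1, h2]
    rw [this, Finset.sum_range_sub f, hfdef]
    simp only [Nat.sub_self, pow_zero, one_mul, Nat.sub_zero, pow_zero, mul_one,
      Nat.cast_zero, expPS_zero, hωn k, map_one, one_mul, mul_one]
    exact hDdef.symm
  -- invertibility facts
  have hlam1 : lam ≠ 1 := fun h => hlam (by rw [h, one_pow])
  have hA0c : PowerSeries.constantCoeff (x - 1) ≠ 0 := by
    rw [hxdef]
    simp [constCoeff_expPS, sub_ne_zero]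
    exact hlam1
  have hDc : PowerSeries.constantCoeff D ≠ 0 := by
    rw [hDdef]
    simp [constCoeff_expPS, sub_ne_zero]
    exact hlam
  have hDinv : D⁻¹ * D = 1 := PowerSeries.inv_mul_cancel _ hDc
  have hDinv' : D * D⁻¹ = 1 := PowerSeries.mul_inv_cancel _ hDc
  have hA0inv : (x - 1)⁻¹ * (x - 1) = 1 := PowerSeries.inv_mul_cancel _ hA0c
  -- root of unity facts
  have hek1 : ∀ k ∈ Finset.Ico 1 n, ε ^ (k : ℤ) ≠ 1 := by
    intro k hk
    obtain ⟨h1, h2⟩ := Finset.mem_Ico.mp hk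
    rw [zpow_natCast]
    exact hprim.pow_ne_one_of_pos_of_lt (by omega) h2
  have hω1 : ∀ k ∈ Finset.Ico 1 n, ω k ≠ 1 := by
    intro k hk h
    apply hek1 k hk
    have : ε ^ (k : ℤ) * ω k = 1 := by rw [hωdef]; rw [hz]; simp
    rw [h, mul_one] at this; exact this
  have hlamω : ∀ k : ℕ, lam ≠ ω k := by
    intro k h
    apply hlam
    rw [h, hωn k]
  -- the H power series
  set Hser : ℕ → PowerSeries ℂ := fun k =>
    PowerSeries.mk (fun m => H p m q lam (ω k) / m.factorial) with hHserdef
  have hHk : ∀ k ∈ Finset.Ico 1 n,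
      (x - PowerSeries.C (ω k)) * Hser k
        = PowerSeries.C ((1 - ω k) ^ p) * expPS q := by
    intro k hk
    exact hH p q lam (ω k) (hω1 k hk) (hlamω k)
  -- decomposition of G
  set a : ℕ → ℂ := fun k =>
    ε ^ (-(k : ℤ) * r) * Cf (-(k : ℤ)) / (1 - ε ^ (k : ℤ)) ^ p with hadef
  have hGsum : G = ∑ k ∈ Finset.Ico 1 n, PowerSeries.C (a k) * Hser k := by
    rw [hG]
    ext m
    simp only [PowerSeries.coeff_mk, dedekindE, map_sum, PowerSeries.coeff_C_mul,
      hHserdef, hadef, Finset.sum_div, ← hεdef]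
    refine Finset.sum_congr rfl fun k hk => ?_
    simp only [Nat.add_sub_cancel]
    ring
  -- the combined scalars
  set c : ℕ → ℂ := fun k => ε ^ (-(k : ℤ) * (r + p)) * Cf (-(k : ℤ)) with hcdef
  have hc0 : c 0 = Cf 0 := by simp [hcdef]
  have hscal : ∀ k ∈ Finset.Ico 1 n, (-1 : ℂ) ^ p * a k * (1 - ω k) ^ p = c k := by
    intro k hk
    have h1e : (1 : ℂ) - ε ^ (k : ℤ) ≠ 0 := sub_ne_zero.mpr (Ne.symm (hek1 k hk))
    have hωe : ω k * ε ^ (k : ℤ) = 1 := by rw [hωdef]; rw [hz]; simp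
    have hωfac : 1 - ω k = (-(ω k)) * (1 - ε ^ (k : ℤ)) := by
      linear_combination (-1 : ℂ) * hωe
    have h2 : (-1 : ℂ) ^ p * (1 - ω k) ^ p = ω k ^ p * (1 - ε ^ (k : ℤ)) ^ p := by
      rw [hωfac, mul_zpow, ← mul_assoc, ← mul_zpow, neg_one_mul, neg_neg]
    have h3 : ω k ^ p = ε ^ (-(k : ℤ) * p) := by rw [hωdef]; rw [← zpow_mul]
    calc (-1 : ℂ) ^ p * a k * (1 - ω k) ^ p
        = ε ^ (-(k : ℤ) * r) * Cf (-(k : ℤ)) * ((-1 : ℂ) ^ p * (1 - ω k) ^ p)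
            / (1 - ε ^ (k : ℤ)) ^ p := by rw [hadef]; ring
      _ = ε ^ (-(k : ℤ) * r) * Cf (-(k : ℤ)) * (ω k ^ p * (1 - ε ^ (k : ℤ)) ^ p)
            / (1 - ε ^ (k : ℤ)) ^ p := by rw [h2]
      _ = ε ^ (-(k : ℤ) * r) * Cf (-(k : ℤ)) * ω k ^ p := by
            rw [mul_div_assoc, mul_div_assoc,
              div_self (zpow_ne_zero _ h1e), mul_one]
      _ = ε ^ (-(k : ℤ) * r) * ε ^ (-(k : ℤ) * p) * Cf (-(k : ℤ)) := by rw [h3]; ring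
      _ = c k := by
            rw [hz, hcdef, show -(k : ℤ) * r + -(k : ℤ) * p = -(k : ℤ) * (r + p) by ring]
  -- K is n-periodic
  have Kper : ∀ u v : ℤ, (n : ℤ) ∣ u - v → K u = K v := by
    have hstep : ∀ (t : ℤ) (v : ℤ), K (v + t * n) = K v := by
      intro t
      induction t using Int.induction_on with
      | zero => intro v; simp
      | succ t ih => intro v
                     have := hK (v + t * n)
                     rw [show v + (t + 1) * n = v + t * n + n by ring, this, ih v]
      | pred t ih => intro v
                     have := hK (v + (-(t : ℤ) - 1) * n)
                     rw [← this, show v + (-(t : ℤ) - 1) * n + n = v + (-(t : ℤ)) * n by ring,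
                       ih v]
    intro u v ⟨t, ht⟩
    have : u = v + t * n := by linarith [ht]
    rw [this, hstep t v]
  -- geometric sum of roots of unity
  have hgeom : ∀ b : ℤ, ∑ k ∈ Finset.range n, (ε ^ (-b)) ^ k
      = if (n : ℤ) ∣ b then (n : ℂ) else 0 := by
    intro b
    by_cases hd : (n : ℤ) ∣ b
    · rw [if_pos hd]
      have : ε ^ (-b) = 1 := (hprim.zpow_eq_one_iff_dvd _).mpr (dvd_neg.mpr hd)
      simp [this]
    · rw [if_neg hd]
      have hζ1 : ε ^ (-b) ≠ 1 := fun h =>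
        hd (dvd_neg.mp ((hprim.zpow_eq_one_iff_dvd _).mp h))
      have hζn : (ε ^ (-b)) ^ n = 1 := by
        rw [← zpow_natCast (ε ^ (-b)) n, ← zpow_mul, mul_comm, zpow_mul,
          zpow_natCast, hprim.pow_eq_one, one_zpow]
      rw [geom_sum_eq hζ1, hζn, sub_self, zero_div]
  -- the key scalar sum
  have hsum : ∀ i ∈ Finset.range n,
      ∑ k ∈ Finset.range n, c k * ω k ^ (n - 1 - i)
        = (n : ℂ) * K ((i : ℤ) - r - p + 1) := by
    intro i hi
    have hiN : i < n := Finset.mem_range.mp hi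
    set m : ℕ := n - 1 - i with hmdef
    have hm : (m : ℤ) = (n : ℤ) - 1 - i := by omega
    set b : ℕ → ℤ := fun j => (j : ℤ) + r + p + m with hbdef
    have step1 : ∀ k ∈ Finset.range n, c k * ω k ^ m
        = ∑ j ∈ Finset.range n, K j * (ε ^ (-(b j))) ^ k := by
      intro k _
      have hωm : ω k ^ m = ε ^ (-(k : ℤ) * m) := by
        rw [hωdef]; rw [← zpow_natCast (ε ^ (-(k : ℤ))) m, ← zpow_mul]
      rw [hcdef]
      simp only
      rw [hCf (-(k : ℤ)), Finset.mul_sum, Finset.sum_mul]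
      refine Finset.sum_congr rfl fun j _ => ?_
      rw [hωm]
      calc ε ^ (-(k : ℤ) * (r + p)) * (K j * ε ^ (-(k : ℤ) * j)) * ε ^ (-(k : ℤ) * m)
          = K j * (ε ^ (-(k : ℤ) * (r + p)) * ε ^ (-(k : ℤ) * j) * ε ^ (-(k : ℤ) * m)) := by
            ring
        _ = K j * ε ^ (-(k : ℤ) * (r + p) + -(k : ℤ) * j + -(k : ℤ) * m) := by
            rw [hz, hz]
        _ = K j * (ε ^ (-(b j))) ^ k := by
            rw [← zpow_natCast (ε ^ (-(b j))) k, ← zpow_mul, hbdef]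
            congr 2
            ring
    rw [Finset.sum_congr rfl step1, Finset.sum_comm]
    have step2 : ∀ j ∈ Finset.range n,
        ∑ k ∈ Finset.range n, K j * (ε ^ (-(b j))) ^ k
          = K j * (if (n : ℤ) ∣ b j then (n : ℂ) else 0) := by
      intro j _
      rw [← Finset.mul_sum, hgeom (b j)]
    rw [Finset.sum_congr rfl step2]
    -- the unique surviving index
    set j0 : ℕ := (((i : ℤ) - r - p + 1) % n).toNat with hj0def
    have hnpos : (0 : ℤ) < n := by exact_mod_cast Nat.pos_of_ne_zero hn0
    have hj0z : (j0 : ℤ) = ((i : ℤ) - r - p + 1) % n :=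
      Int.toNat_of_nonneg (Int.emod_nonneg _ (by exact_mod_cast hn0))
    have hj0lt : j0 < n := by
      have := Int.emod_lt_of_pos ((i : ℤ) - r - p + 1) hnpos
      omega
    have hdvd0 : (n : ℤ) ∣ ((i : ℤ) - r - p + 1) - j0 := by
      rw [hj0z]
      exact Int.dvd_self_sub_of_emod_eq rfl
    have hbj0 : (n : ℤ) ∣ b j0 := by
      have : b j0 = (n : ℤ) - (((i : ℤ) - r - p + 1) - j0) := by
        rw [hbdef]; simp only; rw [hm]; ring
      rw [this]
      exact dvd_sub (dvd_refl _) hdvd0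
    rw [Finset.sum_eq_single_of_mem j0 (Finset.mem_range.mpr hj0lt)]
    · rw [if_pos hbj0]
      have : K (j0 : ℤ) = K ((i : ℤ) - r - p + 1) := by
        apply Kper
        have : (j0 : ℤ) - ((i : ℤ) - r - p + 1)
            = -((((i : ℤ) - r - p + 1)) - j0) := by ring
        rw [this]
        exact dvd_neg.mpr hdvd0
      rw [this, mul_comm]
    · intro j hj hne
      have hjN : j < n := Finset.mem_range.mp hj
      rw [if_neg, mul_zero]
      intro hd
      have hdiff : (n : ℤ) ∣ (j : ℤ) - j0 := by
        have : (j : ℤ) - j0 = b j - b j0 := by rw [hbdef]; simp only; ring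
        rw [this]
        exact dvd_sub hd hbj0
      have := Int.eq_zero_of_dvd_of_natAbs_lt_natAbs hdiff (by omega)
      omega
  -- combine the sums
  set Sfin : PowerSeries ℂ := ∑ i ∈ Finset.range n,
      PowerSeries.C ((n : ℂ) * K ((i : ℤ) - r - p + 1) * lam ^ i) * expPS (i : ℂ)
    with hSfdef
  have hcS : ∑ k ∈ Finset.range n, PowerSeries.C (c k) * S k = Sfin := by
    rw [hSdef, hSfdef]
    simp only [Finset.mul_sum]
    rw [Finset.sum_comm]
    refine Finset.sum_congr rfl fun i hi => ?_
    rw [← hsum i hi, Finset.sum_mul, map_sum, Finset.sum_mul]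
    refine Finset.sum_congr rfl fun k _ => ?_
    rw [← mul_assoc, ← map_mul,
      mul_assoc (c k) (ω k ^ (n - 1 - i)) (lam ^ i)]
  -- LHS * D
  have hLD : (PowerSeries.C (Cf 0) * (expPS q * (x - 1)⁻¹)
        + PowerSeries.C ((-1 : ℂ) ^ p) * G) * D
      = ∑ k ∈ Finset.range n, PowerSeries.C (c k) * (expPS q * S k) := by
    rw [add_mul]
    have h0 : PowerSeries.C (Cf 0) * (expPS q * (x - 1)⁻¹) * D
        = PowerSeries.C (c 0) * (expPS q * S 0) := by
      have hx0 : (x - 1) * S 0 = D := by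
        have h := hAS 0
        simpa [hωdef] using h
      rw [← hx0, hc0]
      calc PowerSeries.C (Cf 0) * (expPS q * (x - 1)⁻¹) * ((x - 1) * S 0)
          = PowerSeries.C (Cf 0) * (expPS q * S 0) * ((x - 1)⁻¹ * (x - 1)) := by ring
        _ = PowerSeries.C (Cf 0) * (expPS q * S 0) := by rw [hA0inv, mul_one]
    have h1 : PowerSeries.C ((-1 : ℂ) ^ p) * G * D
        = ∑ k ∈ Finset.Ico 1 n, PowerSeries.C (c k) * (expPS q * S k) := by
      rw [hGsum, Finset.mul_sum, Finset.sum_mul]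
      refine Finset.sum_congr rfl fun k hk => ?_
      rw [← hAS k]
      calc PowerSeries.C ((-1 : ℂ) ^ p) * (PowerSeries.C (a k) * Hser k)
              * ((x - PowerSeries.C (ω k)) * S k)
          = PowerSeries.C ((-1 : ℂ) ^ p) * PowerSeries.C (a k)
              * ((x - PowerSeries.C (ω k)) * Hser k) * S k := by ring
        _ = PowerSeries.C ((-1 : ℂ) ^ p) * PowerSeries.C (a k)
              * (PowerSeries.C ((1 - ω k) ^ p) * expPS q) * S k := by rw [hHk k hk]
        _ = PowerSeries.C ((-1 : ℂ) ^ p) * PowerSeries.C (a k)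
              * PowerSeries.C ((1 - ω k) ^ p) * (expPS q * S k) := by ring
        _ = PowerSeries.C ((-1 : ℂ) ^ p * a k * (1 - ω k) ^ p) * (expPS q * S k) := by
              rw [← map_mul, ← map_mul]
        _ = PowerSeries.C (c k) * (expPS q * S k) := by rw [hscal k hk]
    rw [h0, h1]
    conv_rhs => rw [Finset.range_eq_Ico,
      Finset.sum_eq_sum_Ico_succ_bot (show 0 < n by omega)]
  -- RHS * D
  have hfactor : ∑ k ∈ Finset.range n, PowerSeries.C (c k) * (expPS q * S k)
      = expPS q * ∑ k ∈ Finset.range n, PowerSeries.C (c k) * S k := by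
    rw [Finset.mul_sum]
    exact Finset.sum_congr rfl fun k _ => by ring
  have hRD : (PowerSeries.C (n : ℂ) *
        (expPS q * D⁻¹ *
          ∑ j ∈ Finset.range n,
            PowerSeries.C (K ((j : ℤ) - r - p + 1) * lam ^ j) * expPS (j : ℂ))) * D
      = expPS q * Sfin := by
    set Sj : PowerSeries ℂ := ∑ j ∈ Finset.range n,
        PowerSeries.C (K ((j : ℤ) - r - p + 1) * lam ^ j) * expPS (j : ℂ) with hSjdef
    calc (PowerSeries.C (n : ℂ) * (expPS q * D⁻¹ * Sj)) * D
        = PowerSeries.C (n : ℂ) * expPS q * Sj * (D⁻¹ * D) := by ring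
      _ = PowerSeries.C (n : ℂ) * expPS q * Sj := by rw [hDinv, mul_one]
      _ = expPS q * Sfin := by
          rw [hSjdef, hSfdef, Finset.mul_sum, Finset.mul_sum]
          refine Finset.sum_congr rfl fun j _ => ?_
          simp only [map_mul]
          ring
  have key : (PowerSeries.C (Cf 0) * (expPS q * (x - 1)⁻¹)
        + PowerSeries.C ((-1 : ℂ) ^ p) * G) * D
      = (PowerSeries.C (n : ℂ) *
          (expPS q * D⁻¹ *
            ∑ j ∈ Finset.range n,
              PowerSeries.C (K ((j : ℤ) - r - p + 1) * lam ^ j) * expPS (j : ℂ))) * D := by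
    rw [hLD, hfactor, hcS]
    exact hRD.symm
  have cancel : ∀ u v : PowerSeries ℂ, u * D = v * D → u = v := by
    intro u v h
    calc u = u * (D * D⁻¹) := by rw [hDinv', mul_one]
      _ = u * D * D⁻¹ := by ring
      _ = v * D * D⁻¹ := by rw [h]
      _ = v * (D * D⁻¹) := by ring
      _ = v := by rw [hDinv', mul_one]
  exact cancel _ _ key
end
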